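/- Let X be a finite set with at least two elements, let l : X → (0,∞), and set k(x,y) = l(y) for all x ≠ y. Write |l|₁ = ∑_{x∈X} l(x) and l_* = min_{x∈X} l(x). Let δ ≥ 1 and c > 0 be such that Υ(r) + Υ(−r) ≥ c·|r|^{1+δ} for all r ∈ ℝ. Then for every α ∈ (0, l_*/2), the Markov generator L satisfies CD_Υ( √(2|l|₁(l_* − 2α)), F ) with CD-function F(r) = (α·c/|l|₁^{δ})·r^{1+δ} for r ≥ 0. -/

import Mathlib

/-!
With constant rates `k(x,y) = l(y)` the generator has constant jumps,
`L f(y) - L f(x) = -|l|₁ (f(y) - f(x))`, so with `u_y = f(y) - f(x)`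
`Ψ_{2,Υ}(f)(x) = ½ ∑_y l(y) Ψ_Υ(f)(y) + ½ |l|₁ ∑_y l(y) e^{u_y} Υ(-u_y)`.
The first sum dominates `l(x) E ≥ l_* E`, where `E = ∑_y l(y) (Υ(u_y) + Υ(-u_y))`.
Pointwise AM–GM, resting on `2 (eᵘ - 1)² ≤ (eᵘ - e⁻ᵘ) u eᵘ`, gives for `κ = √(2|l|₁(l_* - 2α))`
`κ Υ(u) ≤ (l_*/2 - α) (Υ(u) + Υ(-u)) + (|l|₁/2) eᵘ Υ(-u)`, and Jensen's inequality together with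
`c |r|^{1+δ} ≤ Υ(r) + Υ(-r)` gives `F(-L f(x)) ≤ α E`; adding up yields the claim.
-/

open Real Filter MeasureTheory Set

/-- `Υ(r) = e^r - r - 1`. -/
noncomputable def Ups (r : ℝ) : ℝ := Real.exp r - r - 1

/-- `M₁(x) = ∑_{y ≠ x} k(x,y)`. -/
noncomputable def M1fn {X : Type*} (k : X → X → ℝ) (x : X) : ℝ :=
  ∑' y : {y : X // y ≠ x}, k x y

/-- The Markov generator `L f(x) = ∑_y k(x,y)(f(y) - f(x))`. -/
noncomputable def genOp {X : Type*} (k : X → X → ℝ) (f : X → ℝ) (x : X) : ℝ :=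
  ∑' y, k x y * (f y - f x)

/-- `Ψ_Υ(f)(x) = ∑_y k(x,y) Υ(f(y) - f(x))`. -/
noncomputable def psiUps {X : Type*} (k : X → X → ℝ) (f : X → ℝ) (x : X) : ℝ :=
  ∑' y, k x y * Ups (f y - f x)

/-- `B_{Υ'}(f,g)(x) = ∑_y k(x,y) Υ'(f(y)-f(x)) (g(y)-g(x))`. -/
noncomputable def bUps {X : Type*} (k : X → X → ℝ) (f g : X → ℝ) (x : X) : ℝ :=
  ∑' y, k x y * (Real.exp (f y - f x) - 1) * (g y - g x)

/-- `Ψ_{2,Υ}(f) = (1/2)(L Ψ_Υ(f) - B_{Υ'}(f, L f))`. -/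
noncomputable def psi2Ups {X : Type*} (k : X → X → ℝ) (f : X → ℝ) (x : X) : ℝ :=
  (1/2) * (genOp k (psiUps k f) x - bUps k f (genOp k f) x)

/-- Boundedness of a real-valued function on the state space. -/
def BddFun {X : Type*} (f : X → ℝ) : Prop := ∃ B : ℝ, ∀ x, |f x| ≤ B

/-- The standing assumptions on the transition rates: nonnegative off-diagonal rates,
`M₁(x) < ∞` (summability), `k(x,x) = -M₁(x)`, and `M₂(x) < ∞`. -/
def KernelSetting {X : Type*} (k : X → X → ℝ) : Prop :=
  (∀ x y, x ≠ y → 0 ≤ k x y) ∧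
  (∀ x : X, Summable fun y : {y : X // y ≠ x} => k x y) ∧
  (∀ x : X, k x x = -M1fn k x) ∧
  (∀ x : X, Summable fun y : {y : X // y ≠ x} => k x y * M1fn k y)

/-- A CD-function: continuous and nonnegative on `[0,∞)` with `F(0) = 0`, `F(r)/r`
strictly increasing on `(0,∞)` and `1/F` integrable at `∞`. -/
def IsCDFunction (F : ℝ → ℝ) : Prop :=
  ContinuousOn F (Ici 0) ∧ F 0 = 0 ∧ (∀ r : ℝ, 0 ≤ r → 0 ≤ F r) ∧
  StrictMonoOn (fun r => F r / r) (Ioi 0) ∧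
  ∃ c : ℝ, 0 < c ∧ IntegrableOn (fun r => 1 / F r) (Ioi c)

/-- The trivial extension `F₀` of `F : [0,∞) → [0,∞)` by `0` on `(-∞,0)`. -/
noncomputable def trivExt (F : ℝ → ℝ) : ℝ → ℝ := fun r => if 0 ≤ r then F r else 0

/-- The condition `CD_Υ(κ,F)` at a point `x`. -/
def CDUpsAt {X : Type*} (k : X → X → ℝ) (κ : ℝ) (F : ℝ → ℝ) (x : X) : Prop :=
  ∀ f : X → ℝ, BddFun f →
    κ * psiUps k f x + trivExt F (-genOp k f x) ≤ psi2Ups k f x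

/-- The condition `CD_Υ(κ,F)` (at every point). -/
def CDUps {X : Type*} (k : X → X → ℝ) (κ : ℝ) (F : ℝ → ℝ) : Prop :=
  ∀ x : X, CDUpsAt k κ F x

lemma Ups_zero : Ups 0 = 0 := by simp [Ups]

lemma Ups_nonneg (u : ℝ) : 0 ≤ Ups u := by
  have := add_one_le_exp u
  rw [Ups]; linarith

lemma exp_mul_Ups_neg (u : ℝ) : exp u * Ups (-u) = u * exp u - exp u + 1 := by
  rw [Ups, exp_neg]; field_simp; ring

lemma exp_sub_one_mul_self (u : ℝ) : (exp u - 1) * u = Ups u + exp u * Ups (-u) := by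
  rw [exp_mul_Ups_neg, Ups]; ring

lemma le_of_hasDerivAt_of_mul_nonneg {f f' : ℝ → ℝ} (hf : ∀ x, HasDerivAt f (f' x) x)
    (h : ∀ x, 0 ≤ x * f' x) (x : ℝ) : f 0 ≤ f x := by
  have hcont : Continuous f := continuous_iff_continuousAt.2 fun y => (hf y).continuousAt
  rcases lt_trichotomy x 0 with hx | rfl | hx
  · obtain ⟨c, ⟨-, hc⟩, hslope⟩ :=
      exists_hasDerivAt_eq_slope f f' hx hcont.continuousOn fun y _ => hf y
    rw [eq_div_iff (by linarith)] at hslope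
    nlinarith [h c]
  · rfl
  · obtain ⟨c, ⟨hc, -⟩, hslope⟩ :=
      exists_hasDerivAt_eq_slope f f' hx hcont.continuousOn fun y _ => hf y
    rw [eq_div_iff (by linarith)] at hslope
    nlinarith [h c]

lemma two_mul_sq_exp_sub_one_le (u : ℝ) :
    2 * (exp u - 1) ^ 2 ≤ (exp u - exp (-u)) * (u * exp u) := by
  -- `g` has the sign of `u`: this is `tanh (u / 2) ≤ u / 2` for `u ≥ 0`.
  set g : ℝ → ℝ := fun u => (u - 2) * exp u + u + 2
  have hexp : ∀ v, exp (-v) * exp v = 1 := fun v => by rw [← exp_add]; simp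
  have hg : Monotone g := by
    refine monotone_of_hasDerivAt_nonneg (f' := fun u => (u - 1) * exp u + 1) (fun u => ?_) ?_
    · refine ((((hasDerivAt_id u).sub_const 2).mul (hasDerivAt_exp u)).add
        (hasDerivAt_id u)).add_const 2 |>.congr_deriv ?_
      simp only [id]; ring
    · intro u
      show 0 ≤ (u - 1) * exp u + 1
      nlinarith [exp_pos u, add_one_le_exp (-u), hexp u]
  have hg0 : g 0 = 0 := by simp [g]
  have key : (exp u - exp (-u)) * (u * exp u) - 2 * (exp u - 1) ^ 2 = (exp u - 1) * g u := by
    simp only [g]; linear_combination (-u) * hexp u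
  rcases le_total 0 u with hu | hu
  · have := mul_nonneg (sub_nonneg.2 (one_le_exp hu)) (hg0 ▸ hg hu)
    linarith
  · have := mul_nonneg_of_nonpos_of_nonpos (sub_nonpos.2 (exp_le_one_iff.2 hu)) (hg0 ▸ hg hu)
    linarith

lemma mul_Ups_le {a b m : ℝ} (ha : 0 ≤ a) (hb : 0 ≤ b) (hm : m ^ 2 ≤ 8 * a * b) (u : ℝ) :
    m * Ups u ≤ a * (Ups u + Ups (-u)) + b * (exp u * Ups (-u)) := by
  set h : ℝ → ℝ := fun u => a * (Ups u + Ups (-u)) + b * (exp u * Ups (-u)) - m * Ups u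
  set h' : ℝ → ℝ := fun u => a * (exp u - exp (-u)) + b * (u * exp u) - m * (exp u - 1)
  have hderiv : ∀ u, HasDerivAt h (h' u) u := by
    intro u
    have e : h = fun u => a * (exp u + exp (-u) - 2) + b * (u * exp u - exp u + 1)
        - m * (exp u - u - 1) := by
      funext v; simp only [h]; rw [exp_mul_Ups_neg, Ups, Ups]; ring
    rw [e]
    have hneg : HasDerivAt (fun v => exp (-v)) (-exp (-u)) u := by
      simpa using (hasDerivAt_neg u).exp
    refine ((((hasDerivAt_exp u).add hneg).sub_const 2).const_mul a).add
      (((((hasDerivAt_id u).mul (hasDerivAt_exp u)).sub (hasDerivAt_exp u)).add_const 1).const_mul b)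
      |>.sub ((((hasDerivAt_exp u).sub (hasDerivAt_id u)).sub_const 1).const_mul m)
      |>.congr_deriv ?_
    simp only [h', id]; ring
  have hsign : ∀ u, 0 ≤ u * h' u := by
    intro u
    have hXY := two_mul_sq_exp_sub_one_le u
    have hX : 0 ≤ u * (exp u - exp (-u)) := by
      rcases le_total 0 u with hu | hu
      · exact mul_nonneg hu (sub_nonneg.2 (exp_le_exp.2 (by linarith)))
      · exact mul_nonneg_of_nonpos_of_nonpos hu (sub_nonpos.2 (exp_le_exp.2 (by linarith)))
    have hY : 0 ≤ u * (u * exp u) := by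
      rw [← mul_assoc]; exact mul_nonneg (mul_self_nonneg u) (exp_pos u).le
    set s := a * (u * (exp u - exp (-u))) + b * (u * (u * exp u))
    have hs : 0 ≤ s := add_nonneg (mul_nonneg ha hX) (mul_nonneg hb hY)
    -- AM–GM: `s² ≥ 4ab (u (eᵘ - e⁻ᵘ)) (u² eᵘ) ≥ 8ab u² (eᵘ - 1)² ≥ (m u (eᵘ - 1))²`.
    have hsq : (m * (u * (exp u - 1))) ^ 2 ≤ s ^ 2 := by
      nlinarith [sq_nonneg (a * (u * (exp u - exp (-u))) - b * (u * (u * exp u))),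
        mul_le_mul_of_nonneg_left hXY (mul_nonneg (mul_nonneg ha hb) (sq_nonneg u)),
        mul_le_mul_of_nonneg_right hm (sq_nonneg (u * (exp u - 1)))]
    have := (abs_le_of_sq_le_sq' hsq hs).2
    simp only [h']; nlinarith
  have := le_of_hasDerivAt_of_mul_nonneg hderiv hsign u
  simp only [h, neg_zero, Ups_zero] at this
  linarith

lemma mul_sum_Ups_le {ι : Type*} (s : Finset ι) {a b m : ℝ} (ha : 0 ≤ a) (hb : 0 ≤ b)
    (hm : m ^ 2 ≤ 8 * a * b) {w : ι → ℝ} (hw : ∀ i, 0 ≤ w i) (v : ι → ℝ) :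
    m * ∑ i ∈ s, w i * Ups (v i)
      ≤ a * ∑ i ∈ s, w i * (Ups (v i) + Ups (-v i))
        + b * ∑ i ∈ s, w i * (exp (v i) * Ups (-v i)) := by
  rw [Finset.mul_sum, Finset.mul_sum, Finset.mul_sum, ← Finset.sum_add_distrib]
  refine Finset.sum_le_sum fun i _ => ?_
  have := mul_le_mul_of_nonneg_left (mul_Ups_le ha hb hm (v i)) (hw i)
  linarith

lemma isCDFunction_const_mul_rpow {A p : ℝ} (hA : 0 < A) (hp : 1 < p) :
    IsCDFunction (fun r => A * r ^ p) := by
  refine ⟨?_, ?_, ?_, ?_, 1, one_pos, ?_⟩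
  · exact (continuous_const.mul
      (continuous_id.rpow_const fun _ => Or.inr (by linarith))).continuousOn
  · simp [zero_rpow (by linarith : p ≠ 0)]
  · exact fun r hr => mul_nonneg hA.le (rpow_nonneg hr _)
  · have hquot : ∀ r ∈ Ioi (0 : ℝ), A * r ^ p / r = A * r ^ (p - 1) := fun r hr => by
      rw [rpow_sub hr, rpow_one]; ring
    refine fun r hr s hs hrs => ?_
    simp only [hquot r hr, hquot s hs]
    exact mul_lt_mul_of_pos_left (rpow_lt_rpow (le_of_lt hr) hrs (by linarith)) hA
  · refine IntegrableOn.congr_fun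
      ((integrableOn_Ioi_rpow_of_lt (by linarith : -p < -1) one_pos).const_mul A⁻¹)
      (fun r hr => ?_) measurableSet_Ioi
    rw [rpow_neg (zero_le_one.trans (le_of_lt hr))]
    field_simp

lemma rpow_sum_mul_le {ι : Type*} (s : Finset ι) {p : ℝ} (hp : 1 ≤ p) {w v : ι → ℝ}
    (hw : ∀ i, 0 ≤ w i) (hv : ∀ i, 0 ≤ v i) :
    (∑ i ∈ s, w i * v i) ^ p ≤ (∑ i ∈ s, w i) ^ (p - 1) * ∑ i ∈ s, w i * v i ^ p := by
  have hW : 0 ≤ ∑ i ∈ s, w i := Finset.sum_nonneg fun i _ => hw i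
  have hZ : 0 ≤ ∑ i ∈ s, w i * v i ^ p :=
    Finset.sum_nonneg fun i _ => mul_nonneg (hw i) (rpow_nonneg (hv i) _)
  have hp0 : p ≠ 0 := by linarith
  calc (∑ i ∈ s, w i * v i) ^ p
      ≤ ((∑ i ∈ s, w i) ^ (1 - p⁻¹) * (∑ i ∈ s, w i * v i ^ p) ^ p⁻¹) ^ p :=
        rpow_le_rpow (Finset.sum_nonneg fun i _ => mul_nonneg (hw i) (hv i))
          (inner_le_weight_mul_Lp_of_nonneg s hp w v hw hv) (by linarith)
    _ = (∑ i ∈ s, w i) ^ (p - 1) * ∑ i ∈ s, w i * v i ^ p := by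
        rw [mul_rpow (rpow_nonneg hW _) (rpow_nonneg hZ _), ← rpow_mul hW, ← rpow_mul hZ,
          inv_mul_cancel₀ hp0, rpow_one, sub_mul, one_mul, inv_mul_cancel₀ hp0]

lemma mul_rpow_neg_sum_le {ι : Type*} (s : Finset ι) {w v : ι → ℝ} (hw : ∀ i, 0 ≤ w i)
    {c δ : ℝ} (hc : 0 ≤ c) (hδ : 0 ≤ δ) (hups : ∀ r : ℝ, c * |r| ^ (1 + δ) ≤ Ups r + Ups (-r))
    (hneg : 0 ≤ -∑ i ∈ s, w i * v i) :
    c * (-∑ i ∈ s, w i * v i) ^ (1 + δ)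
      ≤ (∑ i ∈ s, w i) ^ δ * ∑ i ∈ s, w i * (Ups (v i) + Ups (-v i)) := by
  have habs : -∑ i ∈ s, w i * v i ≤ ∑ i ∈ s, w i * |v i| := by
    rw [← Finset.sum_neg_distrib]
    exact Finset.sum_le_sum fun i _ => by
      rw [← mul_neg]; exact mul_le_mul_of_nonneg_left (neg_le_abs _) (hw i)
  have hjensen := rpow_sum_mul_le s (by linarith : 1 ≤ 1 + δ) hw (fun i => abs_nonneg (v i))
  rw [add_sub_cancel_left] at hjensen
  calc c * (-∑ i ∈ s, w i * v i) ^ (1 + δ)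
      ≤ c * ((∑ i ∈ s, w i) ^ δ * ∑ i ∈ s, w i * |v i| ^ (1 + δ)) := by
        gcongr
        exact (rpow_le_rpow hneg habs (by linarith)).trans hjensen
    _ = (∑ i ∈ s, w i) ^ δ * ∑ i ∈ s, w i * (c * |v i| ^ (1 + δ)) := by
        simp only [Finset.mul_sum]
        exact Finset.sum_congr rfl fun i _ => by ring
    _ ≤ (∑ i ∈ s, w i) ^ δ * ∑ i ∈ s, w i * (Ups (v i) + Ups (-v i)) := by
        gcongr with i
        · exact rpow_nonneg (Finset.sum_nonneg fun i _ => hw i) _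
        · exact hw i
        · exact hups (v i)

section ConstantRates

variable {X : Type*} [Fintype X] {l : X → ℝ} {k : X → X → ℝ}

lemma tsum_rate_mul_eq_sum (hk : ∀ x y, x ≠ y → k x y = l y) {x : X} {g : X → ℝ}
    (hg : g x = 0) : ∑' y, k x y * g y = ∑ y, l y * g y := by
  rw [tsum_fintype]
  refine Finset.sum_congr rfl fun y _ => ?_
  rcases eq_or_ne x y with rfl | hxy
  · simp [hg]
  · rw [hk x y hxy]

lemma genOp_eq_sum (hk : ∀ x y, x ≠ y → k x y = l y) (f : X → ℝ) (x : X) :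
    genOp k f x = ∑ y, l y * (f y - f x) :=
  tsum_rate_mul_eq_sum hk (sub_self _)

lemma psiUps_eq_sum (hk : ∀ x y, x ≠ y → k x y = l y) (f : X → ℝ) (x : X) :
    psiUps k f x = ∑ y, l y * Ups (f y - f x) :=
  tsum_rate_mul_eq_sum hk (by rw [sub_self, Ups_zero])

lemma psi2Ups_eq_sum (hk : ∀ x y, x ≠ y → k x y = l y) (f : X → ℝ) (x : X) :
    psi2Ups k f x = (∑ y, l y * psiUps k f y
      + (∑ z, l z) * ∑ y, l y * (exp (f y - f x) * Ups (-(f y - f x)))) / 2 := by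
  have hL : genOp k (psiUps k f) x = ∑ y, l y * psiUps k f y - (∑ z, l z) * psiUps k f x := by
    rw [genOp_eq_sum hk, Finset.sum_mul, ← Finset.sum_sub_distrib]
    simp only [mul_sub]
  have hjump : ∀ y, genOp k f y - genOp k f x = -(∑ z, l z) * (f y - f x) := fun y => by
    rw [genOp_eq_sum hk, genOp_eq_sum hk, ← Finset.sum_sub_distrib, neg_mul, Finset.sum_mul,
      ← Finset.sum_neg_distrib]
    exact Finset.sum_congr rfl fun z _ => by ring
  have hB : bUps k f (genOp k f) x
      = -(∑ z, l z) * (psiUps k f x + ∑ y, l y * (exp (f y - f x) * Ups (-(f y - f x)))) := by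
    simp only [bUps, mul_assoc]
    rw [tsum_rate_mul_eq_sum hk (by simp), psiUps_eq_sum hk, ← Finset.sum_add_distrib,
      Finset.mul_sum]
    refine Finset.sum_congr rfl fun y _ => ?_
    rw [hjump, ← mul_add, ← exp_sub_one_mul_self]
    ring
  rw [psi2Ups, hL, hB]
  ring

lemma mul_sum_Ups_add_Ups_neg_le (hl : ∀ x, 0 ≤ l x) (f : X → ℝ) (x : X) :
    l x * ∑ y, l y * (Ups (f y - f x) + Ups (-(f y - f x)))
      ≤ ∑ y, l y * ∑ z, l z * Ups (f z - f y) := by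
  -- Keep the `y = x` term of the outer sum and the `z = x` terms of the inner sums.
  have hinner : ∀ y, l x * Ups (-(f y - f x)) ≤ ∑ z, l z * Ups (f z - f y) := fun y => by
    rw [neg_sub]
    exact Finset.single_le_sum (f := fun z => l z * Ups (f z - f y))
      (fun z _ => mul_nonneg (hl z) (Ups_nonneg _)) (Finset.mem_univ x)
  have houter : l x * ∑ y, l y * Ups (f y - f x)
      ≤ ∑ y, l y * (∑ z, l z * Ups (f z - f y) - l x * Ups (-(f y - f x))) := by
    refine le_of_eq_of_le ?_ (Finset.single_le_sum
      (f := fun y => l y * (∑ z, l z * Ups (f z - f y) - l x * Ups (-(f y - f x))))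
      (fun y _ => mul_nonneg (hl y) (sub_nonneg.2 (hinner y))) (Finset.mem_univ x))
    simp [Ups_zero]
  have hsplit : ∑ y, l y * (∑ z, l z * Ups (f z - f y) - l x * Ups (-(f y - f x)))
      = ∑ y, l y * ∑ z, l z * Ups (f z - f y) - l x * ∑ y, l y * Ups (-(f y - f x)) := by
    rw [Finset.mul_sum, ← Finset.sum_sub_distrib]
    exact Finset.sum_congr rfl fun y _ => by ring
  rw [Finset.sum_congr rfl fun y _ => mul_add (l y) _ _, Finset.sum_add_distrib, mul_add]
  linarith

end ConstantRates

theorem stmt_12_general {X : Type*} [Fintype X]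
    (l : X → ℝ) (hl : ∀ x, 0 < l x)
    (k : X → X → ℝ) (hkoff : ∀ x y : X, x ≠ y → k x y = l y)
    (lstar : ℝ) (hlstar : IsLeast (Set.range l) lstar)
    (δ c : ℝ) (hδ : 1 ≤ δ) (hc : 0 < c)
    (hups : ∀ r : ℝ, c * |r| ^ (1 + δ) ≤ Ups r + Ups (-r))
    (α : ℝ) (hα0 : 0 < α) (hα1 : α < lstar / 2) :
    IsCDFunction (fun r => α * c / (∑ z, l z) ^ δ * r ^ (1 + δ))
    ∧ ∀ (f : X → ℝ) (x : X),
        Real.sqrt (2 * (∑ z, l z) * (lstar - 2 * α)) * psiUps k f x +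
            trivExt (fun r => α * c / (∑ z, l z) ^ δ * r ^ (1 + δ)) (-genOp k f x)
          ≤ psi2Ups k f x := by
  obtain ⟨x₀, -⟩ := hlstar.1
  set S := ∑ z, l z
  have hS : 0 < S := Finset.sum_pos (fun z _ => hl z) ⟨x₀, Finset.mem_univ _⟩
  refine ⟨isCDFunction_const_mul_rpow (by positivity) (by linarith), fun f x => ?_⟩
  set E := ∑ y, l y * (Ups (f y - f x) + Ups (-(f y - f x)))
  set T := ∑ y, l y * (exp (f y - f x) * Ups (-(f y - f x)))
  have hE : 0 ≤ E := Finset.sum_nonneg fun y _ =>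
    mul_nonneg (hl y).le (add_nonneg (Ups_nonneg _) (Ups_nonneg _))
  have hlx : lstar * E ≤ l x * E := mul_le_mul_of_nonneg_right (hlstar.2 ⟨x, rfl⟩) hE
  have hD : l x * E ≤ ∑ y, l y * psiUps k f y := by
    simpa only [psiUps_eq_sum hkoff] using mul_sum_Ups_add_Ups_neg_le (fun y => (hl y).le) f x
  have hκ : √(2 * S * (lstar - 2 * α)) * psiUps k f x ≤ (lstar / 2 - α) * E + S / 2 * T := by
    have hm : √(2 * S * (lstar - 2 * α)) ^ 2 ≤ 8 * (lstar / 2 - α) * (S / 2) := by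
      rw [sq_sqrt (by nlinarith)]; linarith
    rw [psiUps_eq_sum hkoff]
    exact mul_sum_Ups_le _ (by linarith) (by linarith) hm (fun y => (hl y).le) _
  have hF : trivExt (fun r => α * c / S ^ δ * r ^ (1 + δ)) (-genOp k f x) ≤ α * E := by
    rw [genOp_eq_sum hkoff, trivExt]
    split_ifs with hneg
    · have hSδ : 0 < S ^ δ := rpow_pos_of_pos hS δ
      calc α * c / S ^ δ * (-∑ y, l y * (f y - f x)) ^ (1 + δ)
          = α / S ^ δ * (c * (-∑ y, l y * (f y - f x)) ^ (1 + δ)) := by ring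
        _ ≤ α / S ^ δ * (S ^ δ * E) := mul_le_mul_of_nonneg_left
          (mul_rpow_neg_sum_le _ (fun y => (hl y).le) hc.le (by linarith) hups hneg)
          (by positivity)
        _ = α * E := by field_simp
    · positivity
  rw [psi2Ups_eq_sum hkoff]
  linarith

/-- Example 2.8: on a finite state space with rates `k(x,y) = l(y)` (x ≠ y), the
generator satisfies `CD_Υ(√(2|l|₁(l_* - 2α)), F)` with the power-type CD-function
`F(r) = (αc/|l|₁^δ) r^{1+δ}`, for every `α ∈ (0, l_*/2)`. -/
theorem stmt_12 {X : Type*} [Fintype X] (hcard : 2 ≤ Fintype.card X)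
    (l : X → ℝ) (hl : ∀ x, 0 < l x)
    (k : X → X → ℝ) (hkoff : ∀ x y : X, x ≠ y → k x y = l y)
    (hkdiag : ∀ x : X, k x x = l x - ∑ z, l z)
    (lstar : ℝ) (hlstar : IsLeast (Set.range l) lstar)
    (δ c : ℝ) (hδ : 1 ≤ δ) (hc : 0 < c)
    (hups : ∀ r : ℝ, c * |r| ^ (1 + δ) ≤ Ups r + Ups (-r))
    (α : ℝ) (hα0 : 0 < α) (hα1 : α < lstar / 2) :
    IsCDFunction (fun r => α * c / (∑ z, l z) ^ δ * r ^ (1 + δ))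
    ∧ ∀ (f : X → ℝ) (x : X),
        Real.sqrt (2 * (∑ z, l z) * (lstar - 2 * α)) * psiUps k f x +
            trivExt (fun r => α * c / (∑ z, l z) ^ δ * r ^ (1 + δ)) (-genOp k f x)
          ≤ psi2Ups k f x :=
  stmt_12_general l hl k hkoff lstar hlstar δ c hδ hc hups α hα0 hα1
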